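/- Let α > 1 and let m > 0, and let I = ∫_0^m du / √((1+(α−1)u)^{2/(α−1)} − 1). Then, under the substitution v = (1+(α−1)u)^{−1/(α−1)}, I = ∫_{(1+(α−1)m)^{−1/(α−1)}}^{1} v^{1−α}/√(1−v²) dv, and since 0 < v ≤ 1 implies v^{1−α} ≥ 1, it follows that I ≥ arccos((1+(α−1)m)^{−1/(α−1)}). -/

import Mathlib

open intervalIntegral Real

open MeasureTheory Set in
/-- Substitution `v = (1+(α−1)u)^{−1/(α−1)}` in the distance integral of Theorem 6.1:
the integral equals the substituted integral, and is at least
`arccos((1+(α−1)m)^{−1/(α−1)})`. -/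
theorem distance_integral_substitution_and_lower_bound
    (α m : ℝ) (hα : 1 < α) (hm : 0 < m) :
    (∫ u in (0:ℝ)..m,
        1 / Real.sqrt ((1 + (α - 1) * u) ^ ((2:ℝ) / (α - 1)) - 1))
      = (∫ v in ((1 + (α - 1) * m) ^ (-(1:ℝ) / (α - 1)))..(1:ℝ),
          v ^ (1 - α) / Real.sqrt (1 - v ^ 2)) ∧
    Real.arccos ((1 + (α - 1) * m) ^ (-(1:ℝ) / (α - 1)))
      ≤ ∫ u in (0:ℝ)..m,
          1 / Real.sqrt ((1 + (α - 1) * u) ^ ((2:ℝ) / (α - 1)) - 1) := by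
  have hc : (0:ℝ) < α - 1 := by linarith
  set p : ℝ := -(1:ℝ) / (α - 1) with hp
  have hpneg : p < 0 := div_neg_of_neg_of_pos (by norm_num) hc
  have hAm : (1:ℝ) < 1 + (α - 1) * m := by nlinarith
  set b : ℝ := (1 + (α - 1) * m) ^ p with hbdef
  have hb0 : 0 < b := Real.rpow_pos_of_pos (by linarith) _
  have hb1 : b < 1 := Real.rpow_lt_one_of_one_lt_of_neg hAm hpneg
  set g : ℝ → ℝ := fun u => (1 + (α - 1) * u) ^ p with hgdef
  set F : ℝ → ℝ := fun v => v ^ (1 - α) / Real.sqrt (1 - v ^ 2) with hFdef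
  set G : ℝ → ℝ := fun u => 1 / Real.sqrt ((1 + (α - 1) * u) ^ ((2:ℝ) / (α - 1)) - 1)
    with hGdef
  have hApos : ∀ u ∈ Ioo (0:ℝ) m, (1:ℝ) < 1 + (α - 1) * u := by
    intro u hu; nlinarith [hu.1, hu.2]
  set g' : ℝ → ℝ := fun u => (α - 1) * p * (1 + (α - 1) * u) ^ (p - 1) with hg'def
  have hderiv : ∀ u ∈ Ioo (0:ℝ) m, HasDerivWithinAt g (g' u) (Ioo 0 m) u := by
    intro u hu
    have h1 : HasDerivAt (fun u : ℝ => 1 + (α - 1) * u) (α - 1) u := by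
      simpa using ((hasDerivAt_id u).const_mul (α - 1)).const_add 1
    exact (h1.rpow_const (Or.inl (by nlinarith [hu.1, hu.2] :
      (1:ℝ) + (α - 1) * u ≠ 0))).hasDerivWithinAt
  have hanti : StrictAntiOn g (Ioo (0:ℝ) m) := by
    intro x hx y hy hxy
    exact Real.rpow_lt_rpow_of_neg (by nlinarith [hx.1]) (by nlinarith) hpneg
  have hmul : (α - 1) * p = -1 := by rw [hp]; field_simp
  -- the image of the substitution map
  have himg : g '' Ioo (0:ℝ) m = Ioo b 1 := by
    ext v
    constructor
    · rintro ⟨u, hu, rfl⟩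
      refine ⟨Real.rpow_lt_rpow_of_neg (by nlinarith [hu.1]) (by nlinarith [hu.2]) hpneg,
        Real.rpow_lt_one_of_one_lt_of_neg (hApos u hu) hpneg⟩
    · rintro ⟨hv1, hv2⟩
      have hv0 : 0 < v := hb0.trans hv1
      have hvpow1 : 1 < v ^ (-(α - 1)) :=
        (Real.one_lt_rpow_iff_of_pos hv0).mpr (Or.inr ⟨hv2, by linarith⟩)
      have hbpow : b ^ (-(α - 1)) = 1 + (α - 1) * m := by
        rw [hbdef, ← Real.rpow_mul (by linarith : (0:ℝ) ≤ 1 + (α - 1) * m)]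
        rw [show p * -(α - 1) = 1 by rw [hp]; field_simp, Real.rpow_one]
      have hvltb : v ^ (-(α - 1)) < 1 + (α - 1) * m := by
        rw [← hbpow]; exact Real.rpow_lt_rpow_of_neg hb0 hv1 (by linarith)
      refine ⟨(v ^ (-(α - 1)) - 1) / (α - 1), ⟨div_pos (by linarith) hc, ?_⟩, ?_⟩
      · rw [div_lt_iff₀ hc]; nlinarith
      · have hbase : 1 + (α - 1) * ((v ^ (-(α - 1)) - 1) / (α - 1)) = v ^ (-(α - 1)) := by
          field_simp; ring
        show (1 + (α - 1) * ((v ^ (-(α - 1)) - 1) / (α - 1))) ^ p = v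
        rw [hbase, ← Real.rpow_mul hv0.le,
          show -(α - 1) * p = 1 by rw [hp]; field_simp, Real.rpow_one]
  have key : ∫ v in Ioo b 1, F v = ∫ u in Ioo (0:ℝ) m, |g' u| • F (g u) := by
    rw [← himg]
    exact integral_image_eq_integral_abs_deriv_smul measurableSet_Ioo hderiv hanti.injOn F
  -- pointwise identification of the substituted integrand
  have hpt : ∀ u ∈ Ioo (0:ℝ) m, |g' u| • F (g u) = G u := by
    intro u hu
    set A : ℝ := 1 + (α - 1) * u with hA
    have hA1 : 1 < A := hApos u hu
    have hA0 : 0 < A := by linarith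
    have hg'u : g' u = -(A ^ (p - 1)) := by
      show (α - 1) * p * A ^ (p - 1) = -(A ^ (p - 1))
      rw [hmul]; ring
    have habs : |g' u| = A ^ (p - 1) := by
      rw [hg'u, abs_neg, abs_of_pos (Real.rpow_pos_of_pos hA0 _)]
    have hgu : g u = A ^ p := rfl
    have h1 : (A ^ p) ^ (1 - α) = A := by
      rw [← Real.rpow_mul hA0.le, show p * (1 - α) = 1 by rw [hp]; field_simp; ring,
        Real.rpow_one]
    have h2 : (A ^ p) ^ (2:ℕ) = A ^ (2 * p) := by
      rw [sq, ← Real.rpow_add hA0]; ring_nf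
    have hD : (0:ℝ) < A ^ ((2:ℝ) / (α - 1)) - 1 := by
      have : 1 < A ^ ((2:ℝ) / (α - 1)) :=
        (Real.one_lt_rpow_iff_of_pos hA0).mpr (Or.inl ⟨hA1, by positivity⟩)
      linarith
    have hfact : 1 - A ^ (2 * p) = A ^ (2 * p) * (A ^ ((2:ℝ) / (α - 1)) - 1) := by
      rw [mul_sub, mul_one, ← Real.rpow_add hA0,
        show 2 * p + (2:ℝ) / (α - 1) = 0 by rw [hp]; field_simp; ring, Real.rpow_zero]
    have h2p : A ^ (2 * p) = (A ^ p) ^ (2:ℕ) := h2.symm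
    have hsq : Real.sqrt (A ^ (2 * p)) = A ^ p := by
      rw [h2p, Real.sqrt_sq (Real.rpow_pos_of_pos hA0 p).le]
    have hsplit : Real.sqrt (1 - (A ^ p) ^ (2:ℕ)) =
        A ^ p * Real.sqrt (A ^ ((2:ℝ) / (α - 1)) - 1) := by
      rw [h2, hfact, Real.sqrt_mul (Real.rpow_pos_of_pos hA0 _).le, hsq]
    have hsD : Real.sqrt (A ^ ((2:ℝ) / (α - 1)) - 1) ≠ 0 := (Real.sqrt_pos.mpr hD).ne'
    have hAp : A ^ p ≠ 0 := (Real.rpow_pos_of_pos hA0 p).ne'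
    have hApA : A ^ (p - 1) * A = A ^ p := by
      nth_rewrite 2 [show A = A ^ (1:ℝ) by rw [Real.rpow_one]]
      rw [← Real.rpow_add hA0]; ring_nf
    show |g' u| * F (g u) = G u
    rw [habs]
    show A ^ (p - 1) * ((A ^ p) ^ (1 - α) / Real.sqrt (1 - (A ^ p) ^ (2:ℕ))) =
      1 / Real.sqrt (A ^ ((2:ℝ) / (α - 1)) - 1)
    rw [h1, hsplit]
    rw [div_mul_eq_div_div, ← mul_div_assoc, ← mul_div_assoc, hApA, div_self hAp]
  have part1 : (∫ u in (0:ℝ)..m, G u) = ∫ v in b..(1:ℝ), F v := by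
    rw [integral_of_le hm.le, integral_of_le hb1.le,
      MeasureTheory.integral_Ioc_eq_integral_Ioo, MeasureTheory.integral_Ioc_eq_integral_Ioo,
      key]
    exact (setIntegral_congr_fun measurableSet_Ioo hpt).symm
  -- integrability bounds
  have hb1' : b ≤ 1 := hb1.le
  have hIntPow : IntegrableOn (fun v : ℝ => (1 - v) ^ (-(1/2) : ℝ)) (Ioc b 1) := by
    have h := (intervalIntegrable_rpow' (a := 0) (b := 1 - b) (r := -(1/2))
      (by norm_num)).comp_sub_left 1
    simp only [sub_zero, sub_sub_cancel] at h
    exact (intervalIntegrable_iff_integrableOn_Ioc_of_le hb1').mp h.symm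
  have hbound : ∀ v ∈ Ioc b 1, 1 / Real.sqrt (1 - v ^ 2) ≤ (1 - v) ^ (-(1/2) : ℝ) := by
    intro v hv
    have hv0 : 0 < v := hb0.trans_le hv.1.le
    rcases eq_or_lt_of_le hv.2 with h | h
    · simp [h, Real.zero_rpow]
    · have h1v : 0 < 1 - v := by linarith
      have hsq : Real.sqrt (1 - v) ≤ Real.sqrt (1 - v ^ 2) := by
        apply Real.sqrt_le_sqrt; nlinarith
      have hpos : 0 < Real.sqrt (1 - v) := Real.sqrt_pos.mpr h1v
      calc 1 / Real.sqrt (1 - v ^ 2) ≤ 1 / Real.sqrt (1 - v) :=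
            one_div_le_one_div_of_le hpos hsq
        _ = (1 - v) ^ (-(1/2) : ℝ) := by
            rw [Real.rpow_neg h1v.le, Real.sqrt_eq_rpow, one_div]
  have hFbound : ∀ v ∈ Ioc b 1, F v ≤ b ^ (1 - α) * (1 - v) ^ (-(1/2) : ℝ) := by
    intro v hv
    have hv0 : 0 < v := hb0.trans_le hv.1.le
    have h1 : v ^ (1 - α) ≤ b ^ (1 - α) :=
      Real.rpow_le_rpow_of_nonpos hb0 hv.1.le (by linarith)
    have h2 := hbound v hv
    have h3 : (0:ℝ) ≤ 1 / Real.sqrt (1 - v ^ 2) := by positivity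
    calc F v = v ^ (1 - α) * (1 / Real.sqrt (1 - v ^ 2)) := by
          rw [hFdef]; ring
      _ ≤ b ^ (1 - α) * ((1 - v) ^ (-(1/2) : ℝ)) := by
          apply mul_le_mul h1 h2 h3 (Real.rpow_pos_of_pos hb0 _).le
  have hsqrtmeas : Measurable (fun v : ℝ => 1 / Real.sqrt (1 - v ^ 2)) :=
    measurable_const.div ((measurable_const.sub (measurable_id.pow_const 2)).sqrt)
  have hFeq : ∀ v : ℝ, F v = v ^ (1 - α) * (1 / Real.sqrt (1 - v ^ 2)) := by
    intro v; rw [hFdef]; ring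
  have hrpowCont : ContinuousOn (fun v : ℝ => v ^ (1 - α)) (Ioc b 1) := fun v hv =>
    (Real.continuousAt_rpow_const v (1 - α)
      (Or.inl (ne_of_gt (hb0.trans_le hv.1.le)))).continuousWithinAt
  have hFmeas : AEStronglyMeasurable F (volume.restrict (Ioc b 1)) := by
    have h := (hrpowCont.aestronglyMeasurable (μ := volume) measurableSet_Ioc).mul
      (hsqrtmeas.aestronglyMeasurable (μ := volume.restrict (Ioc b 1)))
    exact h.congr (ae_of_all _ fun v => (hFeq v).symm)
  have h1meas : AEStronglyMeasurable (fun v : ℝ => 1 / Real.sqrt (1 - v ^ 2))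
      (volume.restrict (Ioc b 1)) := by
    apply Measurable.aestronglyMeasurable
    exact hsqrtmeas
  have hIntF : IntegrableOn F (Ioc b 1) := by
    apply Integrable.mono' (hIntPow.const_mul (b ^ (1 - α))) hFmeas
    refine (ae_restrict_iff' measurableSet_Ioc).mpr (ae_of_all _ fun v hv => ?_)
    have hFnn : 0 ≤ F v := by
      rw [hFdef]
      have hv0 : 0 < v := hb0.trans_le hv.1.le
      positivity
    rw [Real.norm_eq_abs, abs_of_nonneg hFnn]
    exact hFbound v hv
  have hInt1 : IntegrableOn (fun v : ℝ => 1 / Real.sqrt (1 - v ^ 2)) (Ioc b 1) := by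
    apply Integrable.mono' hIntPow h1meas
    refine (ae_restrict_iff' measurableSet_Ioc).mpr (ae_of_all _ fun v hv => ?_)
    rw [Real.norm_eq_abs, abs_of_nonneg (by positivity)]
    exact hbound v hv
  -- FTC for arcsin
  have harcsin : (∫ v in b..(1:ℝ), 1 / Real.sqrt (1 - v ^ 2)) = π / 2 - Real.arcsin b := by
    rw [show π / 2 = Real.arcsin 1 by rw [Real.arcsin_one]]
    apply integral_eq_sub_of_hasDeriv_right_of_le hb1'
      Real.continuous_arcsin.continuousOn
    · intro x hx
      have h1 : x ≠ -1 := by have := hb0.trans hx.1; linarith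
      have h2 : x ≠ 1 := hx.2.ne
      exact (Real.hasDerivAt_arcsin h1 h2).hasDerivWithinAt
    · exact (intervalIntegrable_iff_integrableOn_Ioc_of_le hb1').mpr hInt1
  have hmono : (∫ v in Ioc b 1, 1 / Real.sqrt (1 - v ^ 2)) ≤ ∫ v in Ioc b 1, F v := by
    apply setIntegral_mono_on hInt1 hIntF measurableSet_Ioc
    intro v hv
    have hv0 : 0 < v := hb0.trans_le hv.1.le
    have h1 : (1:ℝ) ≤ v ^ (1 - α) :=
      Real.one_le_rpow_of_pos_of_le_one_of_nonpos hv0 hv.2 (by linarith)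
    have h3 : (0:ℝ) ≤ 1 / Real.sqrt (1 - v ^ 2) := by positivity
    calc 1 / Real.sqrt (1 - v ^ 2) = 1 * (1 / Real.sqrt (1 - v ^ 2)) := by ring
      _ ≤ v ^ (1 - α) * (1 / Real.sqrt (1 - v ^ 2)) := mul_le_mul_of_nonneg_right h1 h3
      _ = F v := by rw [hFdef]; ring
  refine ⟨part1, ?_⟩
  rw [part1, Real.arccos_eq_pi_div_two_sub_arcsin, ← harcsin,
    integral_of_le hb1', integral_of_le hb1']
  exact hmono
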